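/- arXiv:1608.02279 — 4 statements merged into one kernel-verified Lean document; each statement's English description precedes it below -/
import Mathlib

section
/- Fix an integer k ≥ 2 and let L_k = 12⋯k be the set partition of [k] consisting of a single block. Then for every positive integer n, A_n(L_k) ≤ k^n · n^(n(1 - 1/(k-1))). -/
/-- `i` and `j` lie in the same block of the set partition `P` of `[n] = {1, …, n}`. -/
def SameBlock {n : ℕ} (P : Finpartition (Finset.Icc 1 n)) (i j : ℕ) : Prop :=
  ∃ B ∈ P.parts, i ∈ B ∧ j ∈ B

instance {n : ℕ} (P : Finpartition (Finset.Icc 1 n)) (i j : ℕ) : Decidable (SameBlock P i j) :=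
  inferInstanceAs (Decidable (∃ B ∈ P.parts, i ∈ B ∧ j ∈ B))

/-- The set partition `σ` of `[n]` contains the set partition `τ` of `[k]`: there is a
strictly increasing map `f : [k] → [n]` such that `i, j` lie in the same block of `τ`
iff `f i, f j` lie in the same block of `σ`.  Otherwise `σ` avoids `τ`. -/
def SetPartContains {n k : ℕ} (σ : Finpartition (Finset.Icc 1 n))
    (τ : Finpartition (Finset.Icc 1 k)) : Prop :=
  ∃ f : ℕ → ℕ,
    (∀ i ∈ Finset.Icc 1 k, f i ∈ Finset.Icc 1 n) ∧
    (∀ i ∈ Finset.Icc 1 k, ∀ j ∈ Finset.Icc 1 k, i < j → f i < f j) ∧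
    (∀ i ∈ Finset.Icc 1 k, ∀ j ∈ Finset.Icc 1 k,
      (SameBlock τ i j ↔ SameBlock σ (f i) (f j)))

/-- `A n τ` is the number of set partitions of `[n]` avoiding `τ`. -/
noncomputable def A (n : ℕ) {k : ℕ} (τ : Finpartition (Finset.Icc 1 k)) : ℕ :=
  Nat.card {σ : Finpartition (Finset.Icc 1 n) // ¬ SetPartContains σ τ}

/-- `τ` is the layered partition `L_{a 0, …, a (r-1)}` of `[k]`, whose blocks are the
consecutive intervals `{1, …, a 0}, {a 0 + 1, …, a 0 + a 1}, …` of lengths `a 0, …, a (r-1)`. -/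
def IsLayered {k : ℕ} (r : ℕ) (a : ℕ → ℕ) (τ : Finpartition (Finset.Icc 1 k)) : Prop :=
  τ.parts = (Finset.range r).image
    (fun j => Finset.Icc ((∑ i ∈ Finset.range j, a i) + 1) (∑ i ∈ Finset.range (j + 1), a i))

/-- A uniform set partition of `[n]` with block size `m`: it consists of `n/m` blocks each of
size `m`, and for every `0 ≤ j < m` the interval `S_j = {j·(n/m)+1, …, (j+1)·(n/m)}` contains
exactly one element from each block. -/
def IsUniform (n m : ℕ) (σ : Finpartition (Finset.Icc 1 n)) : Prop :=
  σ.parts.card = n / m ∧ (∀ B ∈ σ.parts, B.card = m) ∧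
    ∀ j < m, ∀ B ∈ σ.parts,
      (Finset.Icc (j * (n / m) + 1) ((j + 1) * (n / m)) ∩ B).card = 1

/-- `P` is the permutation partition of `[2m]` associated to the permutation `π` of `[m]`:
its blocks are `{i, m + π i}` for `i ∈ [m]` (with `Fin m` representing `[m]` via `i ↦ i + 1`). -/
def IsPermPartition (m : ℕ) (π : Equiv.Perm (Fin m))
    (P : Finpartition (Finset.Icc 1 (2 * m))) : Prop :=
  P.parts = Finset.univ.image
    (fun i : Fin m => ({(i : ℕ) + 1, m + (π i : ℕ) + 1} : Finset ℕ))

/-!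
Encode a set partition of `[n]` by the self-map of `[n]` sending each element to the least
element of its block. The encoding is injective, and its fixed points are the block minima.
A partition avoiding `L_k` has all blocks of size at most `k - 1`, hence at least
`m = ⌈n / (k - 1)⌉` blocks, so its code has at least `m` fixed points. A self-map fixing a
given set of at least `m` points is determined by its at most `n - m` other values, and there
are at most `2^n` such sets: `A_n(L_k) ≤ 2^n n^(n - m) ≤ k^n n^(n (1 - 1/(k-1)))`.
-/

open Finset

namespace Finpartition

section DecidableEq

variable {α : Type*} [DecidableEq α] {s : Finset α}

lemma mem_parts_iff_exists_part_eq (P : Finpartition s) {t : Finset α} :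
    t ∈ P.parts ↔ ∃ a ∈ s, P.part a = t := by
  refine ⟨fun ht => ?_, fun ⟨a, ha, hat⟩ => hat ▸ P.part_mem.2 ha⟩
  obtain ⟨a, hat⟩ := P.nonempty_of_mem_parts ht
  exact ⟨a, P.subset ht hat, P.part_eq_of_mem ht hat⟩

lemma ext_part {P Q : Finpartition s} (h : ∀ a ∈ s, P.part a = Q.part a) : P = Q := by
  ext t
  simp only [mem_parts_iff_exists_part_eq]
  exact exists_congr fun a => and_congr_right fun ha => by rw [h a ha]

lemma card_le_card_parts_mul (P : Finpartition s) {m : ℕ} (h : ∀ t ∈ P.parts, #t ≤ m) :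
    #s ≤ #P.parts * m := by
  simpa only [P.biUnion_parts] using card_biUnion_le_card_mul P.parts id m h

end DecidableEq

section LinearOrder

variable {α : Type*} [LinearOrder α] {s : Finset α} (P : Finpartition s)

def minRep (a : s) : s :=
  ⟨(P.part a).min' (P.part_nonempty.2 a.2), P.part_subset _ (min'_mem _ _)⟩

lemma minRep_mem_part (a : s) : (P.minRep a : α) ∈ P.part a :=
  min'_mem _ (P.part_nonempty.2 a.2)

lemma part_minRep (a : s) : P.part (P.minRep a) = P.part a :=
  P.part_eq_of_mem (P.part_mem.2 a.2) (P.minRep_mem_part a)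

lemma minRep_eq_minRep_iff {a b : s} : P.minRep a = P.minRep b ↔ P.part a = P.part b :=
  ⟨fun h => by rw [← P.part_minRep a, h, P.part_minRep],
    fun h => Subtype.ext (by simp only [minRep, h])⟩

lemma minRep_minRep (a : s) : P.minRep (P.minRep a) = P.minRep a :=
  P.minRep_eq_minRep_iff.2 (P.part_minRep a)

lemma card_parts_le_card_fixedPoints_minRep : #P.parts ≤ #{a | P.minRep a = a} := by
  have hsub : P.parts ⊆ ({a | P.minRep a = a} : Finset s).image (fun a : s => P.part a) := by
    intro t ht
    obtain ⟨a, ha, rfl⟩ := P.mem_parts_iff_exists_part_eq.1 ht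
    exact mem_image.2 ⟨P.minRep ⟨a, ha⟩, by simp [minRep_minRep], P.part_minRep _⟩
  exact (card_le_card hsub).trans card_image_le

lemma minRep_injective : Function.Injective (minRep : Finpartition s → s → s) := by
  intro P Q h
  refine ext_part fun a ha => Finset.ext fun b => ?_
  by_cases hb : b ∈ s
  · rw [P.mem_part_iff_part_eq_part hb ha, Q.mem_part_iff_part_eq_part hb ha,
      ← P.minRep_eq_minRep_iff (a := ⟨b, hb⟩) (b := ⟨a, ha⟩),
      ← Q.minRep_eq_minRep_iff (a := ⟨b, hb⟩) (b := ⟨a, ha⟩), h]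
  · exact iff_of_false (fun h' => hb (P.part_subset a h')) (fun h' => hb (Q.part_subset a h'))

lemma natCard_many_parts_le_card_many_fixedPoints (m : ℕ) :
    Nat.card {P : Finpartition s // m ≤ #P.parts} ≤ #{f : s → s | m ≤ #{a | f a = a}} := by
  rw [← Nat.card_eq_finsetCard]
  refine Nat.card_le_card_of_injective (fun P => ⟨P.1.minRep, ?_⟩) fun P Q h => ?_
  · exact mem_filter.2 ⟨mem_univ _, P.2.trans P.1.card_parts_le_card_fixedPoints_minRep⟩
  · exact Subtype.ext (minRep_injective (congrArg Subtype.val h))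

end LinearOrder

end Finpartition

section FixedPoints

variable {ι : Type*} [Fintype ι] [DecidableEq ι]

lemma card_filter_forall_mem_apply_eq_self (T : Finset ι) :
    #{f : ι → ι | ∀ i ∈ T, f i = i} = Fintype.card ι ^ #Tᶜ := by
  have : ({f : ι → ι | ∀ i ∈ T, f i = i} : Finset (ι → ι)) =
      Fintype.piFinset fun i => if i ∈ T then {i} else univ := by
    ext f
    simp only [mem_filter, mem_univ, true_and, Fintype.mem_piFinset]
    refine forall_congr' fun i => ?_
    split_ifs <;> simp [*]
  rw [this, Fintype.card_piFinset]
  simp only [apply_ite card, card_singleton, card_univ, prod_ite, prod_const_one, one_mul,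
    prod_const]
  congr
  ext
  simp

lemma card_many_fixedPoints_le (m : ℕ) :
    #{f : ι → ι | m ≤ #{i | f i = i}} ≤
      2 ^ Fintype.card ι * Fintype.card ι ^ (Fintype.card ι - m) := by
  set n := Fintype.card ι
  have hcover : ({f : ι → ι | m ≤ #{i | f i = i}} : Finset (ι → ι)) ⊆
      ({T : Finset ι | m ≤ #T} : Finset (Finset ι)).biUnion
        fun T => {f : ι → ι | ∀ i ∈ T, f i = i} := by
    intro f hf
    refine mem_biUnion.2 ⟨({i | f i = i} : Finset ι), ?_, ?_⟩ <;> simp_all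
  have hpiece : ∀ T ∈ ({T : Finset ι | m ≤ #T} : Finset (Finset ι)),
      #{f : ι → ι | ∀ i ∈ T, f i = i} ≤ n ^ (n - m) := by
    intro T hT
    have hTc : #Tᶜ ≤ n - m := by
      rw [card_compl]
      have := (mem_filter.1 hT).2
      omega
    rw [card_filter_forall_mem_apply_eq_self]
    rcases Nat.eq_zero_or_pos n with hn | hn
    · simp_all
    · exact Nat.pow_le_pow_right hn hTc
  calc #{f : ι → ι | m ≤ #{i | f i = i}}
      ≤ #({T : Finset ι | m ≤ #T} : Finset (Finset ι)) * n ^ (n - m) :=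
        (card_le_card hcover).trans (card_biUnion_le_card_mul _ _ _ hpiece)
    _ ≤ 2 ^ n * n ^ (n - m) := by
        gcongr
        exact (card_filter_le _ _).trans (by simp [n])

end FixedPoints

lemma setPartContains_of_le_card {n k : ℕ} {σ : Finpartition (Icc 1 n)}
    {τ : Finpartition (Icc 1 k)} (hτ : τ.parts = {Icc 1 k}) {B : Finset ℕ} (hB : B ∈ σ.parts)
    (hkB : k ≤ #B) : SetPartContains σ τ := by
  set e := B.orderEmbOfCardLe hkB
  have hlt : ∀ i ∈ Icc 1 k, i - 1 < k := fun i hi => by simp only [mem_Icc] at hi; omega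
  refine ⟨fun i => if h : i - 1 < k then e ⟨i - 1, h⟩ else 0, fun i hi => ?_,
    fun i hi j hj hij => ?_, fun i hi j hj => ?_⟩
  · simpa [hlt i hi] using σ.subset hB (B.orderEmbOfCardLe_mem hkB _)
  · simp only [hlt i hi, hlt j hj, dif_pos]
    exact e.strictMono (Fin.mk_lt_mk.2 (by simp only [mem_Icc] at hi; omega))
  · simp only [hlt i hi, hlt j hj, dif_pos]
    exact iff_of_true ⟨Icc 1 k, by simp [hτ], hi, hj⟩
      ⟨B, hB, B.orderEmbOfCardLe_mem hkB _, B.orderEmbOfCardLe_mem hkB _⟩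

lemma ceil_div_le_card_parts_of_not_setPartContains {n k : ℕ} (hk : 2 ≤ k)
    {τ : Finpartition (Icc 1 k)} (hτ : τ.parts = {Icc 1 k}) {σ : Finpartition (Icc 1 n)}
    (hσ : ¬ SetPartContains σ τ) : ⌈(n : ℝ) / (k - 1)⌉₊ ≤ #σ.parts := by
  have hsmall : ∀ B ∈ σ.parts, #B ≤ k - 1 := fun B hB =>
    Nat.le_sub_one_of_lt (not_le.1 fun hkB => hσ (setPartContains_of_le_card hτ hB hkB))
  have hn : n ≤ #σ.parts * (k - 1) := by
    simpa only [Nat.card_Icc, Nat.add_sub_cancel] using σ.card_le_card_parts_mul hsmall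
  have hk1 : (0 : ℝ) < k - 1 := by
    have : (2 : ℝ) ≤ k := by exact_mod_cast hk
    linarith
  refine Nat.ceil_le.2 ((div_le_iff₀ hk1).2 ?_)
  rw [← Nat.cast_pred (by omega)]
  exact_mod_cast hn

lemma two_pow_mul_pow_sub_ceil_div_le {n k : ℕ} (hk : 2 ≤ k) (hn : 0 < n) :
    (2 : ℝ) ^ n * (n : ℝ) ^ (n - ⌈(n : ℝ) / (k - 1)⌉₊) ≤
      (k : ℝ) ^ n * (n : ℝ) ^ ((n : ℝ) * (1 - 1 / ((k : ℝ) - 1))) := by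
  have hk1 : (1 : ℝ) ≤ k - 1 := by
    have : (2 : ℝ) ≤ k := by exact_mod_cast hk
    linarith
  have hceil : ⌈(n : ℝ) / (k - 1)⌉₊ ≤ n := Nat.ceil_le.2 (div_le_self (Nat.cast_nonneg n) hk1)
  have hexp : ((n - ⌈(n : ℝ) / (k - 1)⌉₊ : ℕ) : ℝ) ≤ n * (1 - 1 / (k - 1)) := by
    rw [Nat.cast_sub hceil]
    linarith [mul_one_div (n : ℝ) (k - 1), Nat.le_ceil ((n : ℝ) / (k - 1))]
  rw [← Real.rpow_natCast (n : ℝ)]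
  gcongr
  · exact_mod_cast hk
  · exact_mod_cast hn

/-- For the single-block partition `L_k = 12⋯k` with `k ≥ 2`, for all `n ≥ 1`,
`A_n(L_k) ≤ k^n · n^(n(1 - 1/(k-1)))`. -/
theorem block_upper_bound (k : ℕ) (hk : 2 ≤ k) (τ : Finpartition (Finset.Icc 1 k))
    (hτ : τ.parts = {Finset.Icc 1 k}) (n : ℕ) (hn : 0 < n) :
    (A n τ : ℝ) ≤ (k : ℝ) ^ n * (n : ℝ) ^ ((n : ℝ) * (1 - 1 / ((k : ℝ) - 1))) := by
  set m := ⌈(n : ℝ) / (k - 1)⌉₊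
  have hcount : A n τ ≤ 2 ^ n * n ^ (n - m) := calc
    A n τ ≤ Nat.card {σ : Finpartition (Icc 1 n) // m ≤ #σ.parts} :=
      Nat.card_le_card_of_injective
        (fun σ => ⟨σ.1, ceil_div_le_card_parts_of_not_setPartContains hk hτ σ.2⟩)
        fun _ _ h => Subtype.ext (Subtype.mk.inj h)
    _ ≤ _ := Finpartition.natCard_many_parts_le_card_many_fixedPoints m
    _ ≤ _ := card_many_fixedPoints_le m
    _ = 2 ^ n * n ^ (n - m) := by simp
  calc (A n τ : ℝ) ≤ 2 ^ n * (n : ℝ) ^ (n - m) := by exact_mod_cast hcount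
    _ ≤ _ := two_pow_mul_pow_sub_ceil_div_le hk hn
end

section
/- Let k and r be positive integers with r < k, and let a_1, …, a_r be positive integers with a_1 + ⋯ + a_r = k. Then for every positive integer n, A_n(L_{a_1,…,a_r}) ≤ ((k+1)/2)^(2n) · n^(n(1 - 1/(k-r))). -/
/-!
A partition with `r` blocks of size greater than `k - r` contains `L_{a_1,…,a_r}`: choose the
blocks greedily, each time taking, among the unused blocks, an `a_j`-subset lying above the
previously chosen elements whose maximum is as small as possible; every other block then loses
fewer than `a_j` of its elements, which keeps the greedy going. An avoiding partition therefore
has fewer than `r` big blocks, and it is determined by labelling every element with `0` (small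
block) or the index of its big block, plus the map sending each element of a small block to the
minimum of that block. With `S` small elements and `M` small blocks, `S ≤ (k - r) M`, so there are
at most `r ^ n * 2 ^ n * M ^ (S - M) ≤ (2r) ^ n * n ^ (n (1 - 1/(k-r)))` codes, and
`2r ≤ ((k + 1) / 2) ^ 2`.
-/

open Finset Fintype

namespace Finpartition

section Part

variable {α : Type*} [DecidableEq α] {U : Finset α}

theorem image_part (P : Finpartition U) : U.image P.part = P.parts := by
  ext B
  simp only [mem_image]
  refine ⟨?_, fun hB => P.part_surjOn hB⟩
  rintro ⟨i, hi, rfl⟩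
  exact P.part_mem.2 hi

theorem ext_of_part_eq {P Q : Finpartition U} (h : ∀ i ∈ U, P.part i = Q.part i) : P = Q :=
  Finpartition.ext <| by rw [← P.image_part, ← Q.image_part, image_congr h]

end Part

section Labels

variable {α : Type*} [LinearOrder α] {U : Finset α} (P : Finpartition U) (s : ℕ)

def bigParts : Finset (Finset α) := P.parts.filter fun B => s < #B

def partMin (i : U) : U :=
  ⟨(P.part i).min' (P.part_nonempty.2 i.2), P.part_subset _ (min'_mem _ (P.part_nonempty.2 i.2))⟩

theorem partMin_mem_part (i : U) : (P.partMin i : α) ∈ P.part i :=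
  min'_mem _ (P.part_nonempty.2 i.2)

theorem part_partMin (i : U) : P.part (P.partMin i) = P.part i :=
  P.part_eq_of_mem (P.part_mem.2 i.2) (P.partMin_mem_part i)

theorem partMin_eq_partMin_iff {i j : U} : P.partMin i = P.partMin j ↔ P.part i = P.part j := by
  refine ⟨fun h => by rw [← P.part_partMin i, h, P.part_partMin], fun h => ?_⟩
  simp only [partMin, h]

theorem partMin_partMin (i : U) : P.partMin (P.partMin i) = P.partMin i :=
  P.partMin_eq_partMin_iff.2 (P.part_partMin i)

noncomputable def bigPartIndex (B : Finset α) : ℕ :=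
  if h : B ∈ P.bigParts s then (P.bigParts s).equivFin ⟨B, h⟩ + 1 else 0

theorem bigPartIndex_injOn : Set.InjOn (P.bigPartIndex s) (P.bigParts s) := by
  intro B hB C hC h
  simp only [bigPartIndex, dif_pos (mem_coe.1 hB), dif_pos (mem_coe.1 hC), add_left_inj,
    Fin.val_inj, EmbeddingLike.apply_eq_iff_eq, Subtype.mk.injEq] at h
  exact h

noncomputable def bigIndex (i : U) : ℕ := P.bigPartIndex s (P.part i)

theorem part_mem_bigParts_iff (i : U) : P.part i ∈ P.bigParts s ↔ s < #(P.part i) := by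
  simp [bigParts, P.part_mem.2 i.2]

theorem bigIndex_eq_zero_iff (i : U) : P.bigIndex s i = 0 ↔ #(P.part i) ≤ s := by
  rw [← not_lt, ← P.part_mem_bigParts_iff, bigIndex, bigPartIndex]
  split_ifs with h <;> simp [h]

theorem bigIndex_lt {m : ℕ} (hm : #(P.bigParts s) < m) (i : U) : P.bigIndex s i < m := by
  unfold bigIndex bigPartIndex
  split_ifs
  · exact lt_of_le_of_lt (Fin.is_lt _) hm
  · exact Nat.zero_lt_of_lt hm

def smallPartMin (i : U) : U := if #(P.part i) ≤ s then P.partMin i else i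

theorem part_eq_part_iff (i j : U) : P.part i = P.part j ↔ P.bigIndex s i = P.bigIndex s j ∧
    (P.bigIndex s i = 0 → P.smallPartMin s i = P.smallPartMin s j) := by
  refine ⟨fun h => ⟨congrArg (P.bigPartIndex s) h, fun hi => ?_⟩, fun ⟨hidx, hmin⟩ => ?_⟩
  · have hj := (P.bigIndex_eq_zero_iff s i).1 hi
    simp only [smallPartMin, if_pos hj, ← h, P.partMin_eq_partMin_iff.2 h]
  by_cases hi : #(P.part i) ≤ s
  · have hj : #(P.part j) ≤ s := by
      rwa [← bigIndex_eq_zero_iff, ← hidx, bigIndex_eq_zero_iff]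
    have := hmin ((P.bigIndex_eq_zero_iff s i).2 hi)
    simp only [smallPartMin, if_pos hi, if_pos hj] at this
    exact P.partMin_eq_partMin_iff.1 this
  · have hj : ¬ #(P.part j) ≤ s := by
      rwa [← bigIndex_eq_zero_iff, ← hidx, bigIndex_eq_zero_iff]
    exact P.bigPartIndex_injOn s (by simpa [P.part_mem_bigParts_iff] using hi)
      (by simpa [P.part_mem_bigParts_iff] using hj) hidx

theorem eq_of_bigIndex_eq_of_smallPartMin_eq {P Q : Finpartition U}
    (hidx : P.bigIndex s = Q.bigIndex s) (hmin : P.smallPartMin s = Q.smallPartMin s) :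
    P = Q := by
  refine ext_of_part_eq fun i hi => Finset.ext fun j => ?_
  by_cases hj : j ∈ U
  · rw [P.mem_part_iff_part_eq_part hj hi, Q.mem_part_iff_part_eq_part hj hi,
      P.part_eq_part_iff s ⟨j, hj⟩ ⟨i, hi⟩, Q.part_eq_part_iff s ⟨j, hj⟩ ⟨i, hi⟩, hidx, hmin]
  · exact iff_of_false (fun h => hj (P.part_subset _ h)) (fun h => hj (Q.part_subset _ h))

def smallElems : Finset U := univ.filter fun i => #(P.part i) ≤ s

def smallPartMins : Finset U := (P.smallElems s).filter fun i => P.partMin i = i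

theorem partMin_mem_smallPartMins {i : U} (hi : i ∈ P.smallElems s) :
    P.partMin i ∈ P.smallPartMins s := by
  simp only [smallPartMins, smallElems, mem_filter, mem_univ, true_and, P.part_partMin,
    P.partMin_partMin, and_true] at hi ⊢
  exact hi

theorem card_smallElems_le : #(P.smallElems s) ≤ s * #(P.smallPartMins s) := by
  have hfiber : ∀ y ∈ (P.smallElems s).image P.partMin,
      #{x ∈ P.smallElems s | P.partMin x = y} ≤ s := by
    intro y hy
    obtain ⟨i, hi, rfl⟩ := mem_image.1 hy
    calc #{x ∈ P.smallElems s | P.partMin x = P.partMin i} ≤ #(P.part i) := by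
          refine card_le_card_of_injOn Subtype.val (fun x hx => ?_) Subtype.val_injective.injOn
          rw [mem_coe, mem_filter, P.partMin_eq_partMin_iff] at hx
          rw [mem_coe, ← hx.2]
          exact P.mem_part x.2
      _ ≤ s := (mem_filter.1 hi).2
  calc #(P.smallElems s)
      ≤ s * #((P.smallElems s).image P.partMin) := card_le_mul_card_image _ _ hfiber
    _ ≤ s * #(P.smallPartMins s) := by
        gcongr
        exact image_subset_iff.2 fun i hi => P.partMin_mem_smallPartMins s hi

end Labels

section Codes

variable {α : Type*} [DecidableEq α] {U : Finset α} {m : ℕ}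

def zeroSet (ℓ : U → Fin m) : Finset U := univ.filter fun i => (ℓ i : ℕ) = 0

def codePairs (U : Finset α) (m s : ℕ) : Finset ((U → Fin m) × Finset U) :=
  univ.filter fun q => q.2 ⊆ zeroSet q.1 ∧ #(zeroSet q.1) ≤ s * #q.2

def minChoices (q : (U → Fin m) × Finset U) (i : U) : Finset U :=
  if i ∈ zeroSet q.1 \ q.2 then q.2 else {i}

/-- Codes of the partitions of `U` with fewer than `m` parts of size `> s` (see `code`): labels
`ℓ` (`0` on elements of small parts), the set `M` of minima of small parts, and a map sending each
element of a small part to the minimum of its part and every other element to itself. -/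
def codes (U : Finset α) (m s : ℕ) : Finset (Σ _ : (U → Fin m) × Finset U, U → U) :=
  (codePairs U m s).sigma fun q => piFinset (minChoices q)

theorem card_piFinset_minChoices {q : (U → Fin m) × Finset U} (hq : q.2 ⊆ zeroSet q.1) :
    #(piFinset (minChoices q)) = #q.2 ^ (#(zeroSet q.1) - #q.2) := by
  rw [card_piFinset, ← card_sdiff_of_subset hq]
  simp only [minChoices, apply_ite card, card_singleton]
  rw [Fintype.prod_ite_mem, prod_const]

end Codes

end Finpartition

theorem natCast_pow_sub_le_rpow {M S N s : ℕ} (hMS : M ≤ S) (hSN : S ≤ N) (hS : S ≤ s * M)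
    (hN : 0 < N) : (M : ℝ) ^ (S - M) ≤ (N : ℝ) ^ ((N : ℝ) * (1 - 1 / s)) := by
  have hexp : ((S - M : ℕ) : ℝ) ≤ N * (1 - 1 / s) := by
    have hdiv : (S : ℝ) / s ≤ M := div_le_of_le_mul₀ (Nat.cast_nonneg _) (Nat.cast_nonneg _)
      (by rw [mul_comm]; exact_mod_cast hS)
    calc ((S - M : ℕ) : ℝ) = S - M := Nat.cast_sub hMS
      _ ≤ S * (1 - 1 / s) := by linarith [mul_one_div (S : ℝ) s]
      _ ≤ N * (1 - 1 / s) :=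
        mul_le_mul_of_nonneg_right (by exact_mod_cast hSN) (Nat.one_sub_one_div_cast_nonneg s)
  calc (M : ℝ) ^ (S - M) ≤ (N : ℝ) ^ (S - M) := by gcongr; exact_mod_cast hMS.trans hSN
    _ = (N : ℝ) ^ ((S - M : ℕ) : ℝ) := (Real.rpow_natCast _ _).symm
    _ ≤ (N : ℝ) ^ ((N : ℝ) * (1 - 1 / s)) :=
      Real.rpow_le_rpow_of_exponent_le (by exact_mod_cast hN) hexp

namespace Finpartition

theorem card_codes_le {α : Type*} [DecidableEq α] {U : Finset α} (hU : U.Nonempty) (m s : ℕ) :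
    (#(codes U m s) : ℝ) ≤ (2 * m) ^ #U * (#U : ℝ) ^ ((#U : ℝ) * (1 - 1 / s)) := by
  have hterm : ∀ q ∈ codePairs U m s,
      (#(piFinset (minChoices q)) : ℝ) ≤ (#U : ℝ) ^ ((#U : ℝ) * (1 - 1 / s)) := by
    intro q hq
    obtain ⟨hsub, hcard⟩ := (mem_filter.1 hq).2
    rw [card_piFinset_minChoices hsub]
    push_cast
    refine natCast_pow_sub_le_rpow (card_le_card hsub) ?_ hcard hU.card_pos
    simpa using card_le_univ (zeroSet q.1)
  have hpairs : (#(codePairs U m s) : ℝ) ≤ (2 * m) ^ #U := by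
    have := card_le_univ (codePairs U m s)
    simp only [Fintype.card_prod, Fintype.card_fun, Fintype.card_fin, Fintype.card_finset,
      Fintype.card_coe] at this
    calc (#(codePairs U m s) : ℝ) ≤ ((m ^ #U * 2 ^ #U : ℕ) : ℝ) := by exact_mod_cast this
      _ = (2 * m) ^ #U := by push_cast; ring
  calc (#(codes U m s) : ℝ) = ∑ q ∈ codePairs U m s, (#(piFinset (minChoices q)) : ℝ) := by
        rw [codes, card_sigma, Nat.cast_sum]
    _ ≤ ∑ _q ∈ codePairs U m s, (#U : ℝ) ^ ((#U : ℝ) * (1 - 1 / s)) := sum_le_sum hterm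
    _ ≤ (2 * m) ^ #U * (#U : ℝ) ^ ((#U : ℝ) * (1 - 1 / s)) := by
        rw [sum_const, nsmul_eq_mul]
        gcongr

variable {α : Type*} [LinearOrder α] {U : Finset α} (P : Finpartition U) (s : ℕ) {m : ℕ}

theorem zeroSet_bigIndex (hm : #(P.bigParts s) < m) :
    zeroSet (fun i => (⟨P.bigIndex s i, P.bigIndex_lt s hm i⟩ : Fin m)) = P.smallElems s := by
  ext i
  simp [zeroSet, smallElems, bigIndex_eq_zero_iff]

noncomputable def code (hm : #(P.bigParts s) < m) : Σ _ : (U → Fin m) × Finset U, U → U :=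
  ⟨(fun i => ⟨P.bigIndex s i, P.bigIndex_lt s hm i⟩, P.smallPartMins s), P.smallPartMin s⟩

theorem code_mem_codes (hm : #(P.bigParts s) < m) : P.code s hm ∈ codes U m s := by
  refine mem_sigma.2 ⟨mem_filter.2 ⟨mem_univ _, ?_⟩, mem_piFinset.2 fun i => ?_⟩ <;>
    dsimp only [code, minChoices] <;> rw [P.zeroSet_bigIndex s hm]
  · exact ⟨filter_subset _ _, P.card_smallElems_le s⟩
  split_ifs with h
  · obtain ⟨hs, -⟩ := mem_sdiff.1 h
    rw [smallPartMin, if_pos (mem_filter.1 hs).2]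
    exact P.partMin_mem_smallPartMins s hs
  · rw [mem_singleton, smallPartMin]
    split_ifs with hs
    · by_contra hmin
      exact h (mem_sdiff.2 ⟨mem_filter.2 ⟨mem_univ _, hs⟩, fun hi => hmin (mem_filter.1 hi).2⟩)
    · rfl

theorem natCard_card_bigParts_lt_le (U : Finset α) (hU : U.Nonempty) (s m : ℕ) :
    (Nat.card {P : Finpartition U // #(P.bigParts s) < m} : ℝ) ≤
      (2 * m) ^ #U * (#U : ℝ) ^ ((#U : ℝ) * (1 - 1 / s)) := by
  let encode (P : {P : Finpartition U // #(P.bigParts s) < m}) : codes U m s :=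
    ⟨P.1.code s P.2, P.1.code_mem_codes s P.2⟩
  have hinj : Function.Injective encode := by
    rintro ⟨P, hP⟩ ⟨Q, hQ⟩ h
    simp only [encode, Subtype.mk.injEq, code, Sigma.mk.inj_iff, Prod.mk.injEq, heq_eq_eq] at h
    obtain ⟨⟨hidx, -⟩, hmin⟩ := h
    exact Subtype.ext <| eq_of_bigIndex_eq_of_smallPartMin_eq s
      (funext fun i => congrArg Fin.val (congrFun hidx i)) hmin
  calc (Nat.card {P : Finpartition U // #(P.bigParts s) < m} : ℝ) ≤ #(codes U m s) := by
        exact_mod_cast (Nat.card_le_card_of_injective encode hinj).trans_eq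
          (Nat.card_eq_finsetCard _)
    _ ≤ _ := card_codes_le hU m s

end Finpartition
section Layered

variable {a : ℕ → ℕ} {r : ℕ}

variable (a r) in
/-- For `1 ≤ i ≤ ∑ l < r, a l`, `layer a r i = j` exactly when `i` lies in the block
`{∑ l < j, a l + 1, …, ∑ l ≤ j, a l}` of `L_{a 0, …, a (r-1)}`. -/
noncomputable def layer (i : ℕ) : ℕ := Nat.findGreatest (fun j => ∑ l ∈ range j, a l < i) r

theorem sum_range_mono (a : ℕ → ℕ) : Monotone fun j => ∑ l ∈ range j, a l :=
  fun _ _ h => sum_le_sum_of_subset (range_subset_range.2 h)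

theorem sum_range_layer_lt {i : ℕ} (hi : 0 < i) : ∑ l ∈ range (layer a r i), a l < i :=
  Nat.findGreatest_spec (P := fun j => ∑ l ∈ range j, a l < i) (Nat.zero_le r) (by simpa using hi)

theorem layer_lt {i : ℕ} (hi : 0 < i) (hir : i ≤ ∑ l ∈ range r, a l) : layer a r i < r :=
  lt_of_le_of_ne (Nat.findGreatest_le r) fun h => by
    have := sum_range_layer_lt (a := a) (r := r) hi
    rw [h] at this
    omega

theorem le_sum_range_layer_succ {i : ℕ} (hi : 0 < i) (hir : i ≤ ∑ l ∈ range r, a l) :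
    i ≤ ∑ l ∈ range (layer a r i + 1), a l :=
  not_lt.1 (Nat.findGreatest_is_greatest (k := layer a r i + 1) (Nat.lt_succ_self _)
    (layer_lt hi hir))

theorem layer_eq {i j : ℕ} (hj : j < r) (hji : ∑ l ∈ range j, a l < i)
    (hij : i ≤ ∑ l ∈ range (j + 1), a l) : layer a r i = j := by
  refine le_antisymm (not_lt.1 fun h => ?_) (Nat.le_findGreatest hj.le hji)
  have : ∑ l ∈ range (j + 1), a l ≤ ∑ l ∈ range (layer a r i), a l := sum_range_mono a h
  have := sum_range_layer_lt (a := a) (r := r) (hji.trans_le' (Nat.zero_le _))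
  omega

theorem layer_mono : Monotone (layer a r) :=
  fun _ _ h => Nat.findGreatest_mono_left (fun _ hj => hj.trans_le h) r

theorem sameBlock_iff_layer_eq {k : ℕ} {τ : Finpartition (Icc 1 k)} (hτ : IsLayered r a τ)
    (hsum : ∑ l ∈ range r, a l = k) {i j : ℕ} (hi : i ∈ Icc 1 k) (hj : j ∈ Icc 1 k) :
    SameBlock τ i j ↔ layer a r i = layer a r j := by
  rw [mem_Icc] at hi hj
  constructor
  · rintro ⟨B, hB, hiB, hjB⟩
    rw [hτ] at hB
    obtain ⟨l, hl, rfl⟩ := mem_image.1 hB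
    rw [mem_Icc] at hiB hjB
    rw [layer_eq (mem_range.1 hl) hiB.1 hiB.2, layer_eq (mem_range.1 hl) hjB.1 hjB.2]
  · intro h
    have hi' := le_sum_range_layer_succ (a := a) (r := r) hi.1 (hsum ▸ hi.2)
    have hj' := le_sum_range_layer_succ (a := a) (r := r) hj.1 (hsum ▸ hj.2)
    have hi'' := sum_range_layer_lt (a := a) (r := r) hi.1
    have hj'' := sum_range_layer_lt (a := a) (r := r) hj.1
    refine ⟨_, hτ ▸ mem_image_of_mem _ (mem_range.2 (layer_lt hi.1 (hsum ▸ hi.2))), ?_, ?_⟩ <;>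
      rw [mem_Icc] <;> rw [h] at hi' hi'' ⊢ <;> omega

end Layered

theorem card_filter_lt_eq_add_card_filter_lt {C : Finset ℕ} {m₀ M : ℕ} (hM : m₀ ≤ M) :
    #{x ∈ C | m₀ < x} = #{x ∈ C | m₀ < x ∧ x ≤ M} + #{x ∈ C | M < x} := by
  rw [← card_filter_add_card_filter_not (s := {x ∈ C | m₀ < x}) (fun x => x ≤ M), filter_filter,
    filter_filter]
  congr 2
  ext x
  simp only [mem_filter, not_le]
  constructor
  · rintro ⟨hx, -, h⟩; exact ⟨hx, h⟩
  · rintro ⟨hx, h⟩; exact ⟨hx, hM.trans_lt h, h⟩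

/-- `S₀` has the least maximum `M` among the `b`-subsets above `m₀` of the blocks, so a block
`C ≠ C₀` with `b` elements in `(m₀, M]` would give one with maximum `M ∈ C₀`. -/
theorem exists_subset_card_eq_min_max {𝒞 : Finset (Finset ℕ)}
    (hdisj : (𝒞 : Set (Finset ℕ)).PairwiseDisjoint id) (h𝒞 : 𝒞.Nonempty) {b m₀ : ℕ} (hb : 0 < b)
    (hcard : ∀ C ∈ 𝒞, b ≤ #{x ∈ C | m₀ < x}) :
    ∃ C₀ ∈ 𝒞, ∃ S₀ ⊆ C₀, #S₀ = b ∧ ∃ M, m₀ < M ∧ (∀ x ∈ S₀, m₀ < x ∧ x ≤ M) ∧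
      ∀ C ∈ 𝒞, C ≠ C₀ → #{x ∈ C | m₀ < x} < #{x ∈ C | M < x} + b := by
  set 𝒮 := 𝒞.biUnion fun C => powersetCard b {x ∈ C | m₀ < x}
  have mem_𝒮 : ∀ S, S ∈ 𝒮 ↔ ∃ C ∈ 𝒞, S ⊆ {x ∈ C | m₀ < x} ∧ #S = b := by
    simp [𝒮, mem_powersetCard]
  have h𝒮 : 𝒮.Nonempty := by
    obtain ⟨C, hC⟩ := h𝒞
    obtain ⟨S, hS, hSb⟩ := exists_subset_card_eq (hcard C hC)
    exact ⟨S, (mem_𝒮 S).2 ⟨C, hC, hS, hSb⟩⟩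
  obtain ⟨S₀, hS₀, hmin⟩ := exists_min_image 𝒮 (fun S => S.sup id) h𝒮
  obtain ⟨C₀, hC₀, hS₀C₀, hS₀b⟩ := (mem_𝒮 S₀).1 hS₀
  obtain ⟨M, hMS₀, hM⟩ := exists_mem_eq_sup S₀ (card_pos.1 (hS₀b ▸ hb)) id
  have hMC₀ := mem_filter.1 (hS₀C₀ hMS₀)
  refine ⟨C₀, hC₀, S₀, hS₀C₀.trans (filter_subset _ _), hS₀b, M, hMC₀.2, fun x hx =>
    ⟨(mem_filter.1 (hS₀C₀ hx)).2, (le_sup (f := id) hx).trans_eq hM⟩, fun C hC hCC₀ => ?_⟩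
  suffices hlow : #{x ∈ C | m₀ < x ∧ x ≤ M} < b by
    rw [card_filter_lt_eq_add_card_filter_lt hMC₀.2.le]
    omega
  by_contra! hlow
  obtain ⟨S, hS, hSb⟩ := exists_subset_card_eq hlow
  have hS𝒮 : S ∈ 𝒮 := (mem_𝒮 S).2 ⟨C, hC, fun x hx => by
    have := mem_filter.1 (hS hx); exact mem_filter.2 ⟨this.1, this.2.1⟩, hSb⟩
  obtain ⟨y, hyS, hy⟩ := exists_mem_eq_sup S (card_pos.1 (hSb ▸ hb)) id
  have hyC := mem_filter.1 (hS hyS)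
  have hyM : y = M := le_antisymm hyC.2.2 (hM.symm.trans_le ((hmin S hS𝒮).trans_eq hy))
  exact disjoint_left.1 (hdisj hC hC₀ hCC₀) (hyM ▸ hyC.1) hMC₀.1

theorem exists_increasing_subsets {a : ℕ → ℕ} {r m₀ : ℕ} {𝒞 : Finset (Finset ℕ)}
    (ha : ∀ i < r, 0 < a i) (hcard : #𝒞 = r) (hdisj : (𝒞 : Set (Finset ℕ)).PairwiseDisjoint id)
    (hbig : ∀ C ∈ 𝒞, ∑ i ∈ range r, a i < #{x ∈ C | m₀ < x} + r) :
    ∃ C S : ℕ → Finset ℕ, (∀ j < r, C j ∈ 𝒞 ∧ S j ⊆ C j ∧ #(S j) = a j) ∧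
      Set.InjOn C (Set.Iio r) ∧ (∀ j < r, ∀ x ∈ S j, m₀ < x) ∧
      ∀ j j', j < j' → j' < r → ∀ x ∈ S j, ∀ y ∈ S j', x < y := by
  induction r generalizing a m₀ 𝒞 with
  | zero => exact ⟨fun _ => ∅, fun _ => ∅, by simp, by simp, by simp, by simp⟩
  | succ r ih =>
    have hsum := sum_range_succ' a r
    have htail : r ≤ ∑ i ∈ range r, a (i + 1) := by
      simpa using card_nsmul_le_sum (range r) (fun i => a (i + 1)) 1
        fun i hi => ha (i + 1) (by simpa using mem_range.1 hi)
    obtain ⟨C₀, hC₀, S₀, hS₀C₀, hS₀, M, hm₀M, hS₀M, hrest⟩ :=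
      exists_subset_card_eq_min_max (m₀ := m₀) hdisj (card_pos.1 (by omega)) (ha 0 r.succ_pos)
        fun C hC => by have := hbig C hC; omega
    obtain ⟨C', S', hC', hinj', hM', hord'⟩ := ih (a := fun i => a (i + 1)) (m₀ := M)
      (𝒞 := 𝒞.erase C₀) (fun i hi => ha (i + 1) (by omega))
      (by rw [card_erase_of_mem hC₀, hcard]; rfl)
      (hdisj.subset (coe_subset.2 (erase_subset _ _)))
      fun C hC => by
        have := hbig C (mem_of_mem_erase hC)
        have := hrest C (mem_of_mem_erase hC) (ne_of_mem_erase hC)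
        omega
    refine ⟨fun j => if j = 0 then C₀ else C' (j - 1), fun j => if j = 0 then S₀ else S' (j - 1),
      ?_, ?_, ?_, ?_⟩
    · rintro (_ | j) hj
      · simpa using ⟨hC₀, hS₀C₀, hS₀⟩
      · obtain ⟨h1, h2, h3⟩ := hC' j (by omega)
        simpa using ⟨mem_of_mem_erase h1, h2, h3⟩
    · rintro (_ | j) hj (_ | j') hj' h <;> simp only [Set.mem_Iio, Nat.add_one_ne_zero,
        ↓reduceIte, add_tsub_cancel_right, add_lt_add_iff_right] at h hj hj' ⊢
      · exact absurd (h ▸ (hC' j' hj').1) (notMem_erase C₀ 𝒞)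
      · exact absurd (h.symm ▸ (hC' j hj).1) (notMem_erase C₀ 𝒞)
      · exact congrArg (· + 1) (hinj' hj hj' h)
    · rintro (_ | j) hj x hx
      · exact (hS₀M x (by simpa using hx)).1
      · exact hm₀M.trans (hM' j (by omega) x (by simpa using hx))
    · rintro j (_ | j') hjj' hj' x hx y hy
      · omega
      · simp only [Nat.add_one_ne_zero, ↓reduceIte, add_tsub_cancel_right] at hy
        rcases j with _ | j
        · exact ((hS₀M x (by simpa using hx)).2).trans_lt (hM' j' (by omega) y hy)
        · exact hord' j j' (by omega) (by omega) x (by simpa using hx) y hy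

theorem setPartContains_of_subsets {n k r : ℕ} {a : ℕ → ℕ} {τ : Finpartition (Icc 1 k)}
    (hτ : IsLayered r a τ) (hsum : ∑ i ∈ range r, a i = k) (σ : Finpartition (Icc 1 n))
    (C S : ℕ → Finset ℕ) (hCS : ∀ j < r, C j ∈ σ.parts ∧ S j ⊆ C j ∧ #(S j) = a j)
    (hinj : Set.InjOn C (Set.Iio r))
    (hord : ∀ j j', j < j' → j' < r → ∀ x ∈ S j, ∀ y ∈ S j', x < y) :
    SetPartContains σ τ := by
  set idx : ℕ → ℕ := fun i => i - ∑ l ∈ range (layer a r i), a l - 1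
  have hlayer : ∀ i ∈ Icc 1 k, layer a r i < r ∧ idx i < #(S (layer a r i)) := by
    intro i hi
    rw [mem_Icc] at hi
    have hl := layer_lt (a := a) hi.1 (hsum ▸ hi.2)
    have hlo := sum_range_layer_lt (a := a) (r := r) hi.1
    have hhi := le_sum_range_layer_succ (a := a) (r := r) hi.1 (hsum ▸ hi.2)
    rw [sum_range_succ] at hhi
    refine ⟨hl, ?_⟩
    rw [(hCS _ hl).2.2]
    dsimp only [idx]
    omega
  set f : ℕ → ℕ := fun i => Nat.nth (· ∈ S (layer a r i)) (idx i)
  have hfS : ∀ i ∈ Icc 1 k, f i ∈ S (layer a r i) :=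
    fun i hi => Nat.nth_mem _ fun _ => by simpa using (hlayer i hi).2
  have hfC : ∀ i ∈ Icc 1 k, f i ∈ C (layer a r i) :=
    fun i hi => (hCS _ (hlayer i hi).1).2.1 (hfS i hi)
  refine ⟨f, fun i hi => σ.le (hCS _ (hlayer i hi).1).1 (hfC i hi), fun i hi j hj hij => ?_,
    fun i hi j hj => ?_⟩
  · rcases (layer_mono hij.le : layer a r i ≤ layer a r j).lt_or_eq with hlt | heq
    · exact hord _ _ hlt (hlayer j hj).1 _ (hfS i hi) _ (hfS j hj)
    · have := sum_range_layer_lt (a := a) (r := r) (mem_Icc.1 hi).1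
      simp only [f, idx, heq] at this ⊢
      exact Nat.nth_lt_nth' (by omega) fun _ => by simpa using (hlayer j hj).2
  · rw [sameBlock_iff_layer_eq hτ hsum hi hj]
    refine ⟨fun h => ⟨C (layer a r i), (hCS _ (hlayer i hi).1).1, hfC i hi, h ▸ hfC j hj⟩, ?_⟩
    rintro ⟨B, hB, hiB, hjB⟩
    refine hinj (hlayer i hi).1 (hlayer j hj).1 ?_
    rw [σ.eq_of_mem_parts (hCS _ (hlayer i hi).1).1 hB (hfC i hi) hiB,
      σ.eq_of_mem_parts (hCS _ (hlayer j hj).1).1 hB (hfC j hj) hjB]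

theorem setPartContains_of_le_card_bigParts {n k r : ℕ} {a : ℕ → ℕ}
    {τ : Finpartition (Icc 1 k)} (hτ : IsLayered r a τ) (ha : ∀ i < r, 0 < a i)
    (hsum : ∑ i ∈ range r, a i = k) {σ : Finpartition (Icc 1 n)}
    (hbig : r ≤ #(σ.bigParts (k - r))) : SetPartContains σ τ := by
  obtain ⟨𝒞, h𝒞, h𝒞r⟩ := exists_subset_card_eq hbig
  have h𝒞σ : ∀ C ∈ 𝒞, C ∈ σ.parts ∧ k - r < #C := fun C hC => mem_filter.1 (h𝒞 hC)
  obtain ⟨C, S, hCS, hinj, -, hord⟩ := exists_increasing_subsets (m₀ := 0) ha h𝒞r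
    (σ.disjoint.subset fun C hC => (h𝒞σ C hC).1) fun C hC => by
      have hpos : {x ∈ C | 0 < x} = C := filter_true_of_mem fun x hx =>
        (mem_Icc.1 (σ.le (h𝒞σ C hC).1 hx)).1
      have := (h𝒞σ C hC).2
      rw [hpos, hsum]
      omega
  exact setPartContains_of_subsets hτ hsum σ C S
    (fun j hj => ⟨(h𝒞σ _ (hCS j hj).1).1, (hCS j hj).2⟩) hinj hord

theorem two_mul_le_add_one_div_two_sq {r k : ℕ} (hrk : r < k) :
    2 * (r : ℝ) ≤ (((k : ℝ) + 1) / 2) ^ 2 := by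
  have : (r : ℝ) + 1 ≤ k := by exact_mod_cast hrk
  nlinarith [sq_nonneg ((k : ℝ) - 3)]

theorem layered_upper_bound_general (k r : ℕ) (hrk : r < k) (a : ℕ → ℕ)
    (ha : ∀ i < r, 0 < a i) (hsum : ∑ i ∈ Finset.range r, a i = k)
    (τ : Finpartition (Finset.Icc 1 k)) (hτ : IsLayered r a τ) (n : ℕ) (hn : 0 < n) :
    (A n τ : ℝ) ≤
      (((k : ℝ) + 1) / 2) ^ (2 * n) * (n : ℝ) ^ ((n : ℝ) * (1 - 1 / ((k : ℝ) - r))) := by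
  have havoid : A n τ ≤ Nat.card {σ : Finpartition (Icc 1 n) // #(σ.bigParts (k - r)) < r} :=
    Nat.card_le_card_of_injective _ (Subtype.impEmbedding _ _ fun _ hσ =>
      not_le.1 fun h => hσ (setPartContains_of_le_card_bigParts hτ ha hsum h)).injective
  have hcount := Finpartition.natCard_card_bigParts_lt_le (Icc 1 n) (nonempty_Icc.2 hn) (k - r) r
  rw [Nat.card_Icc, Nat.add_sub_cancel, Nat.cast_sub hrk.le] at hcount
  calc (A n τ : ℝ) ≤ _ := by exact_mod_cast havoid
    _ ≤ _ := hcount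
    _ ≤ _ := by
      rw [pow_mul]
      gcongr
      exact two_mul_le_add_one_div_two_sq hrk

/-- For a layered partition `L_{a_1,…,a_r}` of `[k]` with `r < k`, for all
`n ≥ 1`, `A_n(L_{a_1,…,a_r}) ≤ ((k+1)/2)^(2n) · n^(n(1 - 1/(k-r)))`. -/
theorem layered_upper_bound (k r : ℕ) (hr : 0 < r) (hrk : r < k) (a : ℕ → ℕ)
    (ha : ∀ i < r, 0 < a i) (hsum : ∑ i ∈ Finset.range r, a i = k)
    (τ : Finpartition (Finset.Icc 1 k)) (hτ : IsLayered r a τ) (n : ℕ) (hn : 0 < n) :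
    (A n τ : ℝ) ≤
      (((k : ℝ) + 1) / 2) ^ (2 * n) * (n : ℝ) ^ ((n : ℝ) * (1 - 1 / ((k : ℝ) - r))) :=
  layered_upper_bound_general k r hrk a ha hsum τ hτ n hn
end

section
/- Let k and r be positive integers with r < k, and let a_1, …, a_r be positive integers with a_1 + ⋯ + a_r = k. Then there exists a real constant c > 0 such that for all positive integers n, A_n(L_{a_1,…,a_r}) ≥ c^n · n^(n(1 - 1/(k-r))). -/
/-! Put `m = k - r` and `q = ⌊n / m⌋`, and cut `[1, m q]` into `m` consecutive columns of
length `q`. Permutations `π₁, …, π_{m-1}` of `[q]` (with `π₀ = id`) give the set partition in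
which the entry in row `p` of column `j` lies in block `π_j(p)`, all later points being
singletons. Each block meets each column at most once, so along an occurrence of
`L_{a_1,…,a_r}` the column index would increase at each of the `k - r` steps inside the layers,
which `m = k - r` columns do not allow. The first column recovers the `π_j`, so there are at least
`(q!)^(m-1)` avoiders, and `q! ≥ (q/e)^q` turns this into the bound. -/

open Finset
open scoped Nat

noncomputable def fiberPartition {β : Type*} (n : ℕ) (g : ℕ → β) : Finpartition (Icc 1 n) := by
  classical exact Finpartition.ofSetSetoid (Setoid.ker g) (Icc 1 n)

theorem sameBlock_fiberPartition_iff {β : Type*} {n : ℕ} {g : ℕ → β} {x y : ℕ} :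
    SameBlock (fiberPartition n g) x y ↔ x ∈ Icc 1 n ∧ y ∈ Icc 1 n ∧ g x = g y := by
  classical
  rw [SameBlock, ← Finpartition.mem_part_iff_exists, fiberPartition,
    Finpartition.mem_part_ofSetSetoid_iff_rel, Setoid.ker_def]
  tauto

theorem sameBlock_of_isLayered {k r : ℕ} {a : ℕ → ℕ} {τ : Finpartition (Icc 1 k)}
    (hτ : IsLayered r a τ) {j i i' : ℕ} (hj : j < r)
    (hi : i ∈ Icc (∑ l ∈ range j, a l + 1) (∑ l ∈ range (j + 1), a l))
    (hi' : i' ∈ Icc (∑ l ∈ range j, a l + 1) (∑ l ∈ range (j + 1), a l)) :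
    SameBlock τ i i' :=
  ⟨_, hτ ▸ mem_image_of_mem _ (mem_range.2 hj), hi, hi'⟩

theorem sum_sub_le_apply_sum_of_layers {F a : ℕ → ℕ} : ∀ {r : ℕ},
    (∀ i, 1 ≤ i → i < ∑ l ∈ range r, a l → F i ≤ F (i + 1)) →
    (∀ j < r, ∀ i, ∑ l ∈ range j, a l < i → i < ∑ l ∈ range (j + 1), a l → F i < F (i + 1)) →
    ∑ l ∈ range r, a l - r ≤ F (∑ l ∈ range r, a l)
  | 0, _, _ => by simp
  | r + 1, hmono, hlayer => by
    rw [sum_range_succ] at hmono ⊢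
    set S := ∑ l ∈ range r, a l
    have ih : S - r ≤ F S := sum_sub_le_apply_sum_of_layers
      (fun i hi hiS => hmono i hi (by omega)) (fun j hj => hlayer j (by omega))
    have hinside : ∀ t, t < a r → F (S + 1) + t ≤ F (S + 1 + t) := by
      intro t ht
      induction t with
      | zero => rfl
      | succ t iht =>
        have := hlayer r (lt_add_one r) (S + 1 + t) (by omega) (by rw [sum_range_succ]; omega)
        have := iht (by omega)
        rw [show S + 1 + (t + 1) = S + 1 + t + 1 by omega]
        omega
    rcases (a r).eq_zero_or_pos with hr | hr
    · rw [hr, add_zero]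
      omega
    · have hstart : S - r ≤ F (S + 1) := by
        rcases S.eq_zero_or_pos with hS | hS
        · omega
        · exact ih.trans (hmono S hS (by omega))
      have := hinside (a r - 1) (by omega)
      rw [show S + a r = S + 1 + (a r - 1) by omega]
      omega

/-- Along an occurrence of the pattern, `ι` strictly increases at the `k - r` steps inside the
layers, so it cannot stay below `k - r`. -/
theorem not_setPartContains_of_isLayered {n k r : ℕ} {a : ℕ → ℕ} (hrk : r < k)
    (hsum : ∑ i ∈ range r, a i = k) {τ : Finpartition (Icc 1 k)} (hτ : IsLayered r a τ)
    {σ : Finpartition (Icc 1 n)} {ι : ℕ → ℕ} (hι : Monotone ι)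
    (hι_lt : ∀ x ∈ Icc 1 n, ι x < k - r)
    (hσ : ∀ x y, x < y → SameBlock σ x y → ι x < ι y) :
    ¬ SetPartContains σ τ := by
  rintro ⟨f, hf_mem, hf_mono, hf_block⟩
  have hpref : ∀ j < r, ∑ l ∈ range (j + 1), a l ≤ k := fun j hj =>
    hsum ▸ sum_le_sum_of_subset (range_subset_range.2 hj)
  have hgrowth := sum_sub_le_apply_sum_of_layers (F := ι ∘ f) (r := r) (a := a)
    (fun i hi hik => hι (hf_mono i (by simp; omega) (i + 1) (by simp; omega) (by omega)).le)
    (fun j hj i hji hij => by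
      have hi : i ∈ Icc 1 k := by have := hpref j hj; simp; omega
      have hi' : i + 1 ∈ Icc 1 k := by have := hpref j hj; simp; omega
      exact hσ _ _ (hf_mono i hi (i + 1) hi' (by omega)) ((hf_block i hi (i + 1) hi').1
        (sameBlock_of_isLayered hτ hj (by simp; omega) (by simp; omega))))
  rw [hsum] at hgrowth
  have := hι_lt (f k) (hf_mem k (by simp; omega))
  simp only [Function.comp_apply] at hgrowth
  omega

/-- Position `x ∈ [1, m q]` is the entry `(x - 1) % q` of the column `(x - 1) / q`, which is
labelled by the permutation `π ((x - 1) / q)`; the positions after `m q` get labels of their own. -/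
def gridLabel (m q : ℕ) (π : ℕ → Equiv.Perm (Fin q)) (x : ℕ) : Fin q ⊕ ℕ :=
  if h : (x - 1) / q < m ∧ 0 < q then
    .inl (π ((x - 1) / q) ⟨(x - 1) % q, Nat.mod_lt _ h.2⟩)
  else .inr x

theorem gridLabel_apply {m q : ℕ} (π : ℕ → Equiv.Perm (Fin q)) {j : ℕ} (hj : j < m)
    (p : Fin q) : gridLabel m q π (j * q + p + 1) = .inl (π j p) := by
  have hq : 0 < q := p.pos
  have hdiv : (j * q + p) / q = j := by
    rw [Nat.add_comm, Nat.add_mul_div_right _ _ hq, Nat.div_eq_of_lt p.isLt, zero_add]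
  have hmod : (j * q + p) % q = p := by
    rw [Nat.add_comm, Nat.add_mul_mod_self_right, Nat.mod_eq_of_lt p.isLt]
  simp only [gridLabel, Nat.add_sub_cancel, hdiv, hmod, dif_pos (And.intro hj hq)]

theorem column_lt_of_gridLabel_eq {m q : ℕ} {π : ℕ → Equiv.Perm (Fin q)} {x y : ℕ}
    (hx : 1 ≤ x) (hxy : x < y) (h : gridLabel m q π x = gridLabel m q π y) :
    (x - 1) / q < (y - 1) / q ∧ (y - 1) / q < m := by
  unfold gridLabel at h
  split_ifs at h with hxq hyq
  · refine ⟨lt_of_le_of_ne (Nat.div_le_div_right (by omega)) fun hcol => ?_, hyq.1⟩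
    rw [hcol] at h
    have hmod := congrArg Fin.val ((π _).injective (Sum.inl_injective h))
    have := Nat.div_add_mod (x - 1) q
    have := Nat.div_add_mod (y - 1) q
    simp only at hmod
    rw [hcol, hmod] at *
    omega
  all_goals simp at h; omega

theorem not_setPartContains_fiberPartition_gridLabel {n k r q : ℕ} {a : ℕ → ℕ} (hrk : r < k)
    (hsum : ∑ i ∈ range r, a i = k) {τ : Finpartition (Icc 1 k)} (hτ : IsLayered r a τ)
    (π : ℕ → Equiv.Perm (Fin q)) :
    ¬ SetPartContains (fiberPartition n (gridLabel (k - r) q π)) τ := by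
  refine not_setPartContains_of_isLayered (ι := fun x => min ((x - 1) / q) (k - r - 1))
    hrk hsum hτ (fun x y hxy => min_le_min_right _ (Nat.div_le_div_right (by omega)))
    (fun x _ => by omega) fun x y hxy hσ => ?_
  obtain ⟨hx, -, hlabel⟩ := sameBlock_fiberPartition_iff.1 hσ
  have := column_lt_of_gridLabel_eq (mem_Icc.1 hx).1 hxy hlabel
  omega

/-- The first column of a labelling with `π 0 = 1` reads off the other permutations: position
`j q + p + 1` shares its block with position `π j p + 1`. -/
theorem eq_of_fiberPartition_gridLabel_eq {n m q : ℕ} (hmq : m * q ≤ n)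
    {π π' : ℕ → Equiv.Perm (Fin q)} (hπ : π 0 = 1) (hπ' : π' 0 = 1)
    (h : fiberPartition n (gridLabel m q π) = fiberPartition n (gridLabel m q π'))
    {j : ℕ} (hj : j < m) : π j = π' j := by
  ext p
  have hlabel : ∀ ρ : ℕ → Equiv.Perm (Fin q), ρ 0 = 1 → ∀ b : Fin q,
      gridLabel m q ρ (0 * q + b + 1) = .inl b := fun ρ hρ b => by
    rw [gridLabel_apply ρ (by omega) b, hρ, Equiv.Perm.one_apply]
  have hmem : ∀ i < m, ∀ b : Fin q, i * q + b + 1 ∈ Icc 1 n := fun i hi b => by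
    have := Nat.mul_le_mul_right q (show i + 1 ≤ m from hi)
    have := b.isLt
    rw [mem_Icc]
    constructor <;> nlinarith
  have hblock : SameBlock (fiberPartition n (gridLabel m q π)) (j * q + p + 1)
      (0 * q + π j p + 1) :=
    sameBlock_fiberPartition_iff.2 ⟨hmem j hj p, hmem 0 (by omega) _,
      by rw [gridLabel_apply π hj, hlabel π hπ]⟩
  rw [h, sameBlock_fiberPartition_iff, gridLabel_apply π' hj, hlabel π' hπ'] at hblock
  exact congrArg Fin.val (Sum.inl_injective hblock.2.2).symm

def extendPerms {m q : ℕ} (π : Fin m → Equiv.Perm (Fin q)) : ℕ → Equiv.Perm (Fin q)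
  | 0 => 1
  | j + 1 => if h : j < m then π ⟨j, h⟩ else 1

theorem factorial_pow_le_A {k r : ℕ} {a : ℕ → ℕ} (hrk : r < k)
    (hsum : ∑ i ∈ range r, a i = k) {τ : Finpartition (Icc 1 k)} (hτ : IsLayered r a τ)
    (n : ℕ) : (n / (k - r))! ^ (k - r - 1) ≤ A n τ := by
  set m := k - r
  set q := n / m
  let Φ (π : Fin (m - 1) → Equiv.Perm (Fin q)) :
      {σ : Finpartition (Icc 1 n) // ¬ SetPartContains σ τ} :=
    ⟨_, not_setPartContains_fiberPartition_gridLabel hrk hsum hτ (extendPerms π)⟩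
  have hΦ : Function.Injective Φ := fun π π' h => funext fun j => by
    simpa [extendPerms] using eq_of_fiberPartition_gridLabel_eq (Nat.mul_div_le n m) rfl rfl
      (congrArg Subtype.val h) (j := j + 1) (by omega)
  calc q ! ^ (m - 1)
      _ = Nat.card (Fin (m - 1) → Equiv.Perm (Fin q)) := by simp [Fintype.card_perm]
      _ ≤ A n τ := Nat.card_le_card_of_injective Φ hΦ

theorem natCast_pow_div_add_one_le (n : ℕ) {m : ℕ} (hm : 0 < m) :
    (n : ℝ) ^ (n / m + 1) ≤ (Real.exp 1 ^ 2 * m) ^ n * (n / m)! := by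
  set q := n / m
  have hm' : (0 : ℝ) < m := by exact_mod_cast hm
  have hq_le : (n / m : ℝ) ^ q ≤ Real.exp 1 ^ n * q ! := by
    have := Real.pow_div_factorial_le_exp (x := (n / m : ℝ)) (by positivity) q
    rw [div_le_iff₀ (by positivity)] at this
    refine this.trans (mul_le_mul_of_nonneg_right ?_ (by positivity))
    rw [Real.exp_one_pow]
    exact Real.exp_le_exp.2 (div_le_self (by positivity) (by exact_mod_cast hm))
  have hn : (n : ℝ) ≤ Real.exp 1 ^ n := by
    rw [Real.exp_one_pow]
    linarith [Real.add_one_le_exp (n : ℝ)]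
  have hmq : (m : ℝ) ^ q ≤ (m : ℝ) ^ n :=
    pow_le_pow_right₀ (by exact_mod_cast hm) (Nat.div_le_self n m)
  calc (n : ℝ) ^ (q + 1) = n * ((m : ℝ) ^ q * (n / m : ℝ) ^ q) := by
        rw [← mul_pow, mul_div_cancel₀ _ hm'.ne', pow_succ, mul_comm]
    _ ≤ Real.exp 1 ^ n * ((m : ℝ) ^ n * (Real.exp 1 ^ n * q !)) := by gcongr
    _ = (Real.exp 1 ^ 2 * m) ^ n * q ! := by ring

theorem exists_pow_mul_rpow_le_factorial_pow {m : ℕ} (hm : 0 < m) :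
    ∃ c : ℝ, 0 < c ∧ ∀ n : ℕ, 0 < n →
      c ^ n * (n : ℝ) ^ ((n : ℝ) * (1 - 1 / (m : ℝ))) ≤ ((n / m)! : ℝ) ^ (m - 1) := by
  obtain ⟨C, hC, hC_bound⟩ :
      ∃ C : ℝ, 0 < C ∧ ∀ n : ℕ, (n : ℝ) ^ (n / m + 1) ≤ C ^ n * (n / m)! :=
    ⟨_, by positivity, fun n => natCast_pow_div_add_one_le n hm⟩
  refine ⟨(C ^ (m - 1))⁻¹, by positivity, fun n hn => ?_⟩
  set q := n / m
  have hm' : (0 : ℝ) < m := by exact_mod_cast hm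
  have hexponent : (n : ℝ) * (1 - 1 / m) ≤ ((q + 1) * (m - 1) : ℕ) := by
    have hnq : (n : ℝ) < (q + 1) * m := by
      exact_mod_cast (by rw [add_one_mul]; exact Nat.lt_div_mul_add hm : n < (q + 1) * m)
    rw [Nat.cast_mul, Nat.cast_sub hm,
      show (n : ℝ) * (1 - 1 / m) = n / m * (m - 1) by field_simp]
    push_cast
    have hm1 : (1 : ℝ) ≤ m := by exact_mod_cast hm
    exact mul_le_mul_of_nonneg_right ((div_le_iff₀ hm').2 hnq.le) (by linarith)
  have hpow : (n : ℝ) ^ ((n : ℝ) * (1 - 1 / m)) ≤ ((n : ℝ) ^ (q + 1)) ^ (m - 1) := by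
    rw [← pow_mul, ← Real.rpow_natCast]
    exact Real.rpow_le_rpow_of_exponent_le (by exact_mod_cast hn) hexponent
  calc (C ^ (m - 1))⁻¹ ^ n * (n : ℝ) ^ ((n : ℝ) * (1 - 1 / m))
      ≤ (C ^ (m - 1))⁻¹ ^ n * ((C ^ n * q !) ^ (m - 1)) := by
        gcongr
        exact hpow.trans (by gcongr; exact hC_bound n)
    _ = (q ! : ℝ) ^ (m - 1) := by
        rw [mul_pow, ← pow_mul, mul_comm n, pow_mul, inv_pow,
          inv_mul_cancel_left₀ (by positivity)]

theorem layered_lower_bound_general (k r : ℕ) (hrk : r < k) (a : ℕ → ℕ)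
    (hsum : ∑ i ∈ Finset.range r, a i = k)
    (τ : Finpartition (Finset.Icc 1 k)) (hτ : IsLayered r a τ) :
    ∃ c : ℝ, 0 < c ∧ ∀ n : ℕ, 0 < n →
      c ^ n * (n : ℝ) ^ ((n : ℝ) * (1 - 1 / ((k : ℝ) - r))) ≤ (A n τ : ℝ) := by
  obtain ⟨c, hc, hbound⟩ := exists_pow_mul_rpow_le_factorial_pow (m := k - r) (by omega)
  refine ⟨c, hc, fun n hn => ?_⟩
  rw [← Nat.cast_sub hrk.le]
  calc _ ≤ ((n / (k - r))! : ℝ) ^ (k - r - 1) := hbound n hn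
    _ ≤ A n τ := by exact_mod_cast factorial_pow_le_A hrk hsum hτ n

/-- For a layered partition `L_{a_1,…,a_r}` of `[k]` with `r < k`, there is a
constant `c > 0` with `A_n(L_{a_1,…,a_r}) ≥ c^n · n^(n(1 - 1/(k-r)))` for all `n ≥ 1`. -/
theorem layered_lower_bound (k r : ℕ) (hr : 0 < r) (hrk : r < k) (a : ℕ → ℕ)
    (ha : ∀ i < r, 0 < a i) (hsum : ∑ i ∈ Finset.range r, a i = k)
    (τ : Finpartition (Finset.Icc 1 k)) (hτ : IsLayered r a τ) :
    ∃ c : ℝ, 0 < c ∧ ∀ n : ℕ, 0 < n →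
      c ^ n * (n : ℝ) ^ ((n : ℝ) * (1 - 1 / ((k : ℝ) - r))) ≤ (A n τ : ℝ) :=
  layered_lower_bound_general k r hrk a hsum τ hτ
end

section
/- Let τ be a set partition of [k] that contains the set partition 123 of [3] (a single block of size 3) or the set partition 12/34 of [4] (blocks {1,2} and {3,4}). Then liminf_{n→∞} log(A_n(τ)) / (n log n) ≥ 1/2. -/
/-! For `m = ⌊n/2⌋` and a permutation `π` of `[m]`, the partition of `[n]` with blocks
`{i, m + π i}` (and `{n}` if `n` is odd) has, in each block, at most one element of `[1, m]` and
at most one of `(m, n]`. So it contains neither `123` nor `12/34`, and since containment is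
transitive it avoids `τ`. Hence `A_n(τ) ≥ ⌊n/2⌋!`, and `log m! ≥ m log m - m` gives the bound.
The crude bound `A_n(τ) ≤ n^n` only serves to keep the sequence bounded above, without which
its real `liminf` would be a junk value. -/

open Finset Filter Function Equiv

theorem SetPartContains.trans {n k l : ℕ} {σ : Finpartition (Icc 1 n)}
    {τ : Finpartition (Icc 1 k)} {ρ : Finpartition (Icc 1 l)}
    (hστ : SetPartContains σ τ) (hτρ : SetPartContains τ ρ) : SetPartContains σ ρ := by
  obtain ⟨f, hf_mem, hf_mono, hf_block⟩ := hστ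
  obtain ⟨g, hg_mem, hg_mono, hg_block⟩ := hτρ
  exact ⟨f ∘ g, fun i hi => hf_mem _ (hg_mem i hi),
    fun i hi j hj hij => hf_mono _ (hg_mem i hi) _ (hg_mem j hj) (hg_mono i hi j hj hij),
    fun i hi j hj => (hg_block i hi j hj).trans (hf_block _ (hg_mem i hi) _ (hg_mem j hj))⟩

theorem sameBlock_iff_mem_part {n : ℕ} (P : Finpartition (Icc 1 n)) (i j : ℕ) :
    SameBlock P i j ↔ j ∈ P.part i := by
  simp only [SameBlock, P.mem_part_iff_exists, and_comm]

theorem not_setPartContains_123 {n m : ℕ} {σ : Finpartition (Icc 1 n)}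
    (hσ : ∀ a b, a < b → SameBlock σ a b → a ≤ m ∧ m < b)
    {p : Finpartition (Icc 1 3)} (hp : p.parts = {Icc 1 3}) :
    ¬ SetPartContains σ p := by
  rintro ⟨f, -, hf_mono, hf_block⟩
  have h12 : SameBlock p 1 2 := ⟨_, hp ▸ mem_singleton_self _, by decide, by decide⟩
  have h23 : SameBlock p 2 3 := ⟨_, hp ▸ mem_singleton_self _, by decide, by decide⟩
  have := hσ _ _ (hf_mono 1 (by decide) 2 (by decide) (by decide))
    ((hf_block 1 (by decide) 2 (by decide)).1 h12)
  have := hσ _ _ (hf_mono 2 (by decide) 3 (by decide) (by decide))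
    ((hf_block 2 (by decide) 3 (by decide)).1 h23)
  omega

theorem not_setPartContains_12_34 {n m : ℕ} {σ : Finpartition (Icc 1 n)}
    (hσ : ∀ a b, a < b → SameBlock σ a b → a ≤ m ∧ m < b)
    {p : Finpartition (Icc 1 4)}
    (hp : p.parts = ({({1, 2} : Finset ℕ), ({3, 4} : Finset ℕ)} : Finset (Finset ℕ))) :
    ¬ SetPartContains σ p := by
  rintro ⟨f, -, hf_mono, hf_block⟩
  have h12 : SameBlock p 1 2 := ⟨{1, 2}, by simp [hp], by decide, by decide⟩
  have h34 : SameBlock p 3 4 := ⟨{3, 4}, by simp [hp], by decide, by decide⟩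
  have := hσ _ _ (hf_mono 1 (by decide) 2 (by decide) (by decide))
    ((hf_block 1 (by decide) 2 (by decide)).1 h12)
  have := hσ _ _ (hf_mono 3 (by decide) 4 (by decide) (by decide))
    ((hf_block 3 (by decide) 4 (by decide)).1 h34)
  have := hf_mono 2 (by decide) 3 (by decide) (by decide)
  omega

section Involution

variable {α : Type*} [DecidableEq α] {p q : α → α}

def Function.Involutive.setoid (hp : Involutive p) : Setoid α where
  r a b := b = a ∨ b = p a
  iseqv := by
    refine ⟨fun _ => Or.inl rfl, ?_, ?_⟩
    · rintro a b (rfl | rfl)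
      exacts [Or.inl rfl, Or.inr (hp a).symm]
    · rintro a b c (rfl | rfl) (rfl | rfl)
      exacts [Or.inl rfl, Or.inr rfl, Or.inr rfl, Or.inl (hp a)]

instance (hp : Involutive p) : DecidableRel hp.setoid.r :=
  fun a b => inferInstanceAs (Decidable (b = a ∨ b = p a))

def Finpartition.ofInvolutive (s : Finset α) (hp : Involutive p) : Finpartition s :=
  Finpartition.ofSetSetoid hp.setoid s

theorem Finpartition.mem_part_ofInvolutive {s : Finset α} (hp : Involutive p) {a b : α} :
    b ∈ (ofInvolutive s hp).part a ↔ a ∈ s ∧ b ∈ s ∧ (b = a ∨ b = p a) :=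
  mem_part_ofSetSetoid_iff_rel s

theorem Finpartition.eqOn_of_ofInvolutive_eq {s : Finset α} {hp : Involutive p}
    {hq : Involutive q} (hps : Set.MapsTo p s s) (hqs : Set.MapsTo q s s)
    (h : ofInvolutive s hp = ofInvolutive s hq) : Set.EqOn p q s := by
  intro x hx
  have hpx : p x ∈ (ofInvolutive s hq).part x :=
    h ▸ (mem_part_ofInvolutive hp).2 ⟨hx, hps hx, Or.inr rfl⟩
  have hqx : q x ∈ (ofInvolutive s hp).part x :=
    h ▸ (mem_part_ofInvolutive hq).2 ⟨hx, hqs hx, Or.inr rfl⟩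
  rw [mem_part_ofInvolutive] at hpx hqx
  rcases hpx.2.2 with hpx | hpx
  · rcases hqx.2.2 with hqx | hqx <;> simp_all
  · exact hpx

end Involution

section PermPartition

/-- The involution of `ℕ` swapping `i + 1` with `m + π i + 1` for `i < m` and fixing all other
numbers. -/
def permPairing (m : ℕ) (π : Perm (Fin m)) (x : ℕ) : ℕ :=
  if h : 0 < x ∧ x ≤ m then m + π ⟨x - 1, by omega⟩ + 1
  else if h : m < x ∧ x ≤ 2 * m then π.symm ⟨x - m - 1, by omega⟩ + 1
  else x

variable {m : ℕ} (π : Perm (Fin m))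

theorem permPairing_involutive : Involutive (permPairing m π) := by
  intro x
  unfold permPairing
  split_ifs <;>
    (try simp only [show ∀ k, m + k + 1 - m - 1 = k by omega, Nat.add_sub_cancel, Fin.eta,
      Equiv.symm_apply_apply, Equiv.apply_symm_apply]) <;>
    omega

theorem permPairing_succ (i : Fin m) : permPairing m π (i + 1) = m + π i + 1 := by
  simp [permPairing]

theorem permPairing_mapsTo {n : ℕ} (hmn : 2 * m ≤ n) :
    Set.MapsTo (permPairing m π) (Icc 1 n : Set ℕ) (Icc 1 n) := by
  intro x hx
  simp only [coe_Icc, Set.mem_Icc] at hx ⊢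
  unfold permPairing
  split_ifs <;> omega

theorem le_and_lt_of_lt_permPairing {x : ℕ} (h : x < permPairing m π x) :
    x ≤ m ∧ m < permPairing m π x := by
  unfold permPairing at *
  split_ifs at * <;> omega

def permPartition (n : ℕ) (π : Perm (Fin (n / 2))) : Finpartition (Icc 1 n) :=
  Finpartition.ofInvolutive (Icc 1 n) (permPairing_involutive π)

theorem le_and_lt_of_sameBlock_permPartition {n : ℕ} (π : Perm (Fin (n / 2))) (a b : ℕ)
    (hab : a < b) (h : SameBlock (permPartition n π) a b) : a ≤ n / 2 ∧ n / 2 < b := by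
  rw [sameBlock_iff_mem_part, permPartition, Finpartition.mem_part_ofInvolutive] at h
  obtain ⟨-, -, rfl | rfl⟩ := h
  · omega
  · exact le_and_lt_of_lt_permPairing π hab

theorem permPartition_injective (n : ℕ) : Injective (permPartition n) := by
  intro π π' h
  ext i
  have hmaps := fun π => permPairing_mapsTo (n := n) π (Nat.mul_div_le n 2)
  have hi : (i : ℕ) + 1 ∈ (Icc 1 n : Set ℕ) := by simp; omega
  have := Finpartition.eqOn_of_ofInvolutive_eq (hmaps π) (hmaps π') h hi
  rw [permPairing_succ, permPairing_succ] at this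
  omega

end PermPartition

section PartitionCount

variable {α : Type*} [DecidableEq α] {s : Finset α}

theorem Finpartition.parts_eq_image_part (P : Finpartition s) : P.parts = s.image P.part := by
  ext B
  refine ⟨fun hB => ?_, fun hB => ?_⟩
  · obtain ⟨x, hx, rfl⟩ := P.part_surjOn hB
    exact mem_image_of_mem _ hx
  · obtain ⟨x, hx, rfl⟩ := mem_image.1 hB
    exact P.part_mem.2 hx

theorem Finpartition.eq_of_part_eq {P Q : Finpartition s}
    (h : ∀ x ∈ s, P.part x = Q.part x) : P = Q := by
  ext1
  rw [P.parts_eq_image_part, Q.parts_eq_image_part]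
  exact image_congr h

end PartitionCount

/-- A partition is determined by the map sending each element to the least element of its
block. -/
theorem Finpartition.card_le_pow {α : Type*} [LinearOrder α] (s : Finset α) :
    Fintype.card (Finpartition s) ≤ #s ^ #s := by
  let leastInBlock (P : Finpartition s) (x : s) : s :=
    ⟨(P.part x).min' (P.part_nonempty.2 x.2), P.part_subset _ (min'_mem _ _)⟩
  have part_eq_iff (P : Finpartition s) {x y : α} (hx : x ∈ s) (hy : y ∈ s) :
      y ∈ P.part x ↔ leastInBlock P ⟨y, hy⟩ = leastInBlock P ⟨x, hx⟩ := by
    rw [P.mem_part_iff_part_eq_part hy hx, Subtype.ext_iff]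
    refine ⟨fun h => by simp only [leastInBlock, h], fun h => ?_⟩
    simp only [leastInBlock] at h
    exact P.eq_of_mem_parts (P.part_mem.2 hy) (P.part_mem.2 hx)
      (h ▸ min'_mem _ _) (min'_mem _ _)
  have : Injective leastInBlock := by
    intro P Q h
    refine Finpartition.eq_of_part_eq fun x hx => ?_
    ext y
    by_cases hy : y ∈ s
    · rw [part_eq_iff P hx hy, part_eq_iff Q hx hy, h]
    · exact iff_of_false (fun h => hy (P.part_subset _ h)) (fun h => hy (Q.part_subset _ h))
  simpa using Fintype.card_le_of_injective _ this

theorem A_le_pow (n : ℕ) {k : ℕ} (τ : Finpartition (Icc 1 k)) : A n τ ≤ n ^ n :=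
  calc A n τ ≤ Nat.card (Finpartition (Icc 1 n)) := Finite.card_subtype_le _
    _ ≤ n ^ n := by simpa [Nat.card_eq_fintype_card] using Finpartition.card_le_pow (Icc 1 n)

theorem factorial_le_A {n k : ℕ} {τ : Finpartition (Icc 1 k)}
    (havoid : ∀ π, ¬ SetPartContains (permPartition n π) τ) : (n / 2).factorial ≤ A n τ := by
  have hinj : Injective fun π => (⟨permPartition n π, havoid π⟩ :
      {σ : Finpartition (Icc 1 n) // ¬ SetPartContains σ τ}) :=
    fun π π' h => permPartition_injective n (Subtype.mk_eq_mk.1 h)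
  simpa [A, Fintype.card_perm] using Nat.card_le_card_of_injective _ hinj

open Topology

theorem natCast_mul_log_sub_le_log_factorial (m : ℕ) :
    m * Real.log m - m ≤ Real.log m.factorial := by
  rcases eq_or_ne m 0 with rfl | hm
  · simp
  have hlog_m : 0 ≤ Real.log m := Real.log_natCast_nonneg m
  have hlog_2π : 0 ≤ Real.log (2 * Real.pi) :=
    Real.log_nonneg (by linarith [Real.pi_gt_three])
  linarith [Stirling.le_log_factorial_stirling hm]

theorem tendsto_natCast_div_two_div :
    Tendsto (fun n : ℕ => ((n / 2 : ℕ) : ℝ) / n) atTop (𝓝 (1 / 2)) := by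
  have := (tendsto_nat_floor_mul_div_atTop (R := ℝ) (a := 1 / 2) (by norm_num)).comp
    tendsto_natCast_atTop_atTop
  refine this.congr fun n => ?_
  rw [comp_apply, one_div_mul_eq_div, Nat.floor_div_ofNat, Nat.floor_natCast]

theorem tendsto_mul_log_sub_div_mul_log {c : ℕ → ℝ} {a : ℝ} (ha : 0 < a)
    (hc : Tendsto (fun n => c n / n) atTop (𝓝 a)) :
    Tendsto (fun n : ℕ => (c n * Real.log (c n) - c n) / (n * Real.log n)) atTop (𝓝 a) := by
  set r := fun n => c n / n
  have hlog : Tendsto (fun n : ℕ => Real.log n) atTop atTop :=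
    Real.tendsto_log_atTop.comp tendsto_natCast_atTop_atTop
  have hlog_r : Tendsto (fun n => Real.log (r n) / Real.log n) atTop (𝓝 0) :=
    ((Real.continuousAt_log ha.ne').tendsto.comp hc).div_atTop hlog
  have hlim : Tendsto (fun n => r n * (1 + Real.log (r n) / Real.log n - (Real.log n)⁻¹))
      atTop (𝓝 (a * (1 + 0 - 0))) :=
    hc.mul ((tendsto_const_nhds.add hlog_r).sub hlog.inv_tendsto_atTop)
  rw [add_zero, sub_zero, mul_one] at hlim
  refine hlim.congr' ?_
  filter_upwards [hc.eventually (lt_mem_nhds ha), eventually_gt_atTop 1] with n hr hn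
  have hn0 : (0 : ℝ) < n := by exact_mod_cast (by omega : 0 < n)
  have hlog_n : 0 < Real.log n := Real.log_pos (by exact_mod_cast hn)
  have hc_n : c n = r n * n := (div_mul_cancel₀ _ hn0.ne').symm
  rw [hc_n, Real.log_mul (by positivity) hn0.ne']
  field_simp
  ring

theorem half_le_liminf_log_div_mul_log {a : ℕ → ℕ} (hlow : ∀ n, (n / 2).factorial ≤ a n)
    (hup : ∀ n, a n ≤ n ^ n) :
    1 / 2 ≤ liminf (fun n : ℕ => Real.log (a n) / (n * Real.log n)) atTop := by
  set m : ℕ → ℝ := fun n => ((n / 2 : ℕ) : ℝ)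
  have hg := tendsto_mul_log_sub_div_mul_log (by norm_num) tendsto_natCast_div_two_div
  have ha_pos (n : ℕ) : (0 : ℝ) < a n := mod_cast (Nat.factorial_pos _).trans_le (hlow n)
  have hlower : ∀ᶠ n : ℕ in atTop,
      (m n * Real.log (m n) - m n) / (n * Real.log n) ≤ Real.log (a n) / (n * Real.log n) := by
    refine Eventually.of_forall fun n => div_le_div_of_nonneg_right ?_ (by positivity)
    refine (natCast_mul_log_sub_le_log_factorial _).trans (Real.log_le_log (by positivity) ?_)
    exact_mod_cast hlow n
  have hupper : ∀ᶠ n : ℕ in atTop, Real.log (a n) / (n * Real.log n) ≤ 1 := by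
    filter_upwards [eventually_gt_atTop 1] with n hn
    have hlog_n : 0 < Real.log n := Real.log_pos (by exact_mod_cast hn)
    rw [div_le_one (by positivity), ← Real.log_pow]
    exact Real.log_le_log (ha_pos n) (by exact_mod_cast hup n)
  rw [← hg.liminf_eq]
  exact liminf_le_liminf hlower hg.isBoundedUnder_ge
    (isCoboundedUnder_ge_of_eventually_le _ hupper)

/-- If a set partition `τ` of `[k]` contains `123` (single block of size 3)
or `12/34` (blocks `{1,2}` and `{3,4}`), then
`liminf_{n→∞} log(A_n(τ)) / (n log n) ≥ 1/2`. -/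
theorem contains_pattern_liminf (k : ℕ) (τ : Finpartition (Finset.Icc 1 k))
    (h : (∃ p : Finpartition (Finset.Icc 1 3), p.parts = {Finset.Icc 1 3} ∧
            SetPartContains τ p) ∨
         (∃ p : Finpartition (Finset.Icc 1 4),
            p.parts = ({({1, 2} : Finset ℕ), ({3, 4} : Finset ℕ)} : Finset (Finset ℕ)) ∧
            SetPartContains τ p)) :
    (1 : ℝ) / 2 ≤
      Filter.liminf (fun n : ℕ => Real.log (A n τ) / ((n : ℝ) * Real.log n)) Filter.atTop := by
  have havoid (n : ℕ) (π : Perm (Fin (n / 2))) : ¬ SetPartContains (permPartition n π) τ := by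
    intro hcont
    have hcross := le_and_lt_of_sameBlock_permPartition π
    rcases h with ⟨p, hp, hτp⟩ | ⟨p, hp, hτp⟩
    · exact not_setPartContains_123 hcross hp (hcont.trans hτp)
    · exact not_setPartContains_12_34 hcross hp (hcont.trans hτp)
  exact half_le_liminf_log_div_mul_log (fun n => factorial_le_A (havoid n)) (A_le_pow · τ)
end
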